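/- Define F(v) = (Γ(1/2 + v/2)/Γ(1/2 - v/2))^2 · Γ(1-v)/Γ(1+v). Then F is positive and strictly decreasing on [0, 2/38], with F(0) = 1. -/

import Mathlib

/-!
Write `g = log ∘ Γ` and `φ t = 2 g (t / 2) - g t`. On `(-1, 1)` all Gamma factors of `F` are
positive and `log F v = φ (1 + v) - φ (1 - v)`. Since `g` is strictly convex, the chord of `g`
over `[s / 2, t / 2]` is strictly less steep than the chord over `[s, t]`, which says exactly that
`φ` is strictly decreasing on `(0, ∞)`; hence `F` is strictly decreasing on `(-1, 1)`.
Strict convexity of `g` comes from its convexity (Bohr–Mollerup) and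
`g x = g (x + 1) - log x`, with `-log` strictly convex.
-/

noncomputable def F (v : ℝ) : ℝ :=
  (Real.Gamma (1 / 2 + v / 2) / Real.Gamma (1 / 2 - v / 2)) ^ 2 *
    (Real.Gamma (1 - v) / Real.Gamma (1 + v))

open Real Set

section Secant

variable {𝕜 : Type*} [Field 𝕜] [LinearOrder 𝕜] [IsStrictOrderedRing 𝕜] {s : Set 𝕜} {f : 𝕜 → 𝕜}

theorem StrictConvexOn.secant_lt_secant (hf : StrictConvexOn 𝕜 s f) {a b c d : 𝕜}
    (ha : a ∈ s) (hb : b ∈ s) (hc : c ∈ s) (hd : d ∈ s)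
    (hab : a < b) (hcd : c < d) (hac : a < c) (hbd : b ≤ d) :
    (f b - f a) / (b - a) < (f d - f c) / (d - c) :=
  calc (f b - f a) / (b - a) ≤ (f d - f a) / (d - a) :=
        hf.convexOn.secant_mono ha hb hd hab.ne' (hab.trans_le hbd).ne' hbd
    _ = (f a - f d) / (a - d) := by rw [← neg_div_neg_eq, neg_sub, neg_sub]
    _ < (f c - f d) / (c - d) :=
        hf.secant_strict_mono hd ha hc (hac.trans hcd).ne hcd.ne hac
    _ = (f d - f c) / (d - c) := by rw [← neg_div_neg_eq, neg_sub, neg_sub]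

theorem StrictConvexOn.strictAntiOn_two_mul_comp_half_sub (hf : StrictConvexOn 𝕜 (Ioi 0) f) :
    StrictAntiOn (fun t => 2 * f (t / 2) - f t) (Ioi 0) := by
  intro s hs t ht hst
  have hslope := hf.secant_lt_secant (half_pos hs) (half_pos ht) hs ht (by linarith) hst
    (half_lt_self hs) (half_le_self ht.le)
  rw [show t / 2 - s / 2 = (t - s) / 2 by ring, div_div_eq_mul_div,
    div_lt_div_iff_of_pos_right (sub_pos.2 hst)] at hslope
  linarith

end Secant

theorem Real.strictConvexOn_log_Gamma : StrictConvexOn ℝ (Ioi 0) (log ∘ Gamma) := by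
  have hshift : ConvexOn ℝ (Ioi 0) (fun x => log (Gamma (x + 1))) :=
    (convexOn_log_Gamma.translate_left 1).subset
      (fun x (hx : 0 < x) => show 0 < 1 + x by linarith)
      (convex_Ioi 0)
  refine (hshift.add_strictConvexOn strictConcaveOn_log_Ioi.neg).congr fun x hx => ?_
  simp [Gamma_add_one (ne_of_gt hx), log_mul (ne_of_gt hx) (Gamma_pos_of_pos hx).ne']

noncomputable def logGammaDefect (t : ℝ) : ℝ := 2 * log (Gamma (t / 2)) - log (Gamma t)

theorem strictAntiOn_logGammaDefect : StrictAntiOn logGammaDefect (Ioi 0) :=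
  strictConvexOn_log_Gamma.strictAntiOn_two_mul_comp_half_sub

theorem F_eq_exp_logGammaDefect {v : ℝ} (hv : v ∈ Ioo (-1) 1) :
    F v = exp (logGammaDefect (1 + v) - logGammaDefect (1 - v)) := by
  obtain ⟨hv₀, hv₁⟩ := hv
  have hGamma {t : ℝ} (ht : 0 < t) : exp (log (Gamma t)) = Gamma t := exp_log (Gamma_pos_of_pos ht)
  have hexp_two (x : ℝ) : exp (2 * x) = exp x ^ 2 := by rw [← exp_nat_mul]; norm_num
  simp only [logGammaDefect, exp_sub, hexp_two]
  rw [hGamma (by linarith), hGamma (by linarith), hGamma (by linarith), hGamma (by linarith), F]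
  field_simp

theorem F_strictAntiOn : StrictAntiOn F (Ioo (-1) 1) := by
  intro x hx y hy hxy
  rw [F_eq_exp_logGammaDefect hx, F_eq_exp_logGammaDefect hy, exp_lt_exp]
  have hplus := strictAntiOn_logGammaDefect (mem_Ioi.2 (by linarith [hx.1] : (0 : ℝ) < 1 + x))
    (mem_Ioi.2 (by linarith [hy.1] : (0 : ℝ) < 1 + y)) (by linarith : 1 + x < 1 + y)
  have hminus := strictAntiOn_logGammaDefect (mem_Ioi.2 (by linarith [hy.2] : (0 : ℝ) < 1 - y))
    (mem_Ioi.2 (by linarith [hx.2] : (0 : ℝ) < 1 - x)) (by linarith : 1 - y < 1 - x)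
  linarith

theorem F_pos_strictAnti :
    (∀ x ∈ Set.Icc (0 : ℝ) (2 / 38), 0 < F x) ∧
      StrictAntiOn F (Set.Icc (0 : ℝ) (2 / 38)) ∧ F 0 = 1 := by
  have hsub : Icc (0 : ℝ) (2 / 38) ⊆ Ioo (-1) 1 := Icc_subset_Ioo (by norm_num) (by norm_num)
  refine ⟨fun x hx => ?_, F_strictAntiOn.mono hsub, ?_⟩
  · rw [F_eq_exp_logGammaDefect (hsub hx)]
    exact exp_pos _
  · rw [F_eq_exp_logGammaDefect (by norm_num), add_zero, sub_zero, sub_self, exp_zero]
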